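/- Let 0 ≤ ε < π/2 and let r, a, c ∈ ℝ² be pairwise distinct points with |∠ a c r − π/2| ≤ ε. Then dist(r, a) ≥ cos ε · dist(r, c). -/

import Mathlib

open Real EuclideanGeometry

noncomputable section

abbrev Pt : Type := EuclideanSpace ℝ (Fin 2)

theorem sin_angle_mul_dist_le_dist {V P : Type*} [NormedAddCommGroup V] [InnerProductSpace ℝ V]
    [MetricSpace P] [NormedAddTorsor V P] (a c r : P) :
    Real.sin (∠ a c r) * dist r c ≤ dist r a := by
  rw [dist_comm r c, sin_angle_mul_dist_eq_sin_angle_mul_dist a c r]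
  exact mul_le_of_le_one_left dist_nonneg (sin_le_one _)

theorem cos_le_sin_of_abs_sub_pi_div_two_le {θ ε : ℝ} (hε : ε ≤ π) (h : |θ - π / 2| ≤ ε) :
    Real.cos ε ≤ Real.sin θ := by
  rw [← cos_pi_div_two_sub, ← cos_abs (π / 2 - θ), abs_sub_comm]
  exact cos_le_cos_of_nonneg_of_le_pi (abs_nonneg _) hε h

theorem stmt12_general (ε : ℝ) (hε : ε < π / 2) (r a c : Pt)
    (ha : |∠ a c r - π / 2| ≤ ε) :
    Real.cos ε * dist r c ≤ dist r a := by
  have hsin : Real.cos ε ≤ Real.sin (∠ a c r) :=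
    cos_le_sin_of_abs_sub_pi_div_two_le (by linarith [pi_pos]) ha
  calc Real.cos ε * dist r c ≤ Real.sin (∠ a c r) * dist r c :=
        mul_le_mul_of_nonneg_right hsin dist_nonneg
    _ ≤ dist r a := sin_angle_mul_dist_le_dist a c r

/-- Law-of-sines estimate (Lemma 12 (1)): if `∠ a c r` is within `ε` of `π/2`,
then `dist r a ≥ cos ε · dist r c`. -/
theorem stmt12 (ε : ℝ) (hε0 : 0 ≤ ε) (hε : ε < π / 2) (r a c : Pt)
    (h1 : r ≠ a) (h2 : r ≠ c) (h3 : a ≠ c)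
    (ha : |∠ a c r - π / 2| ≤ ε) :
    Real.cos ε * dist r c ≤ dist r a :=
  stmt12_general ε hε r a c ha
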